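/- Let (X_t)_{t∈(0,∞)} be a real-valued stochastic process whose finite-dimensional distributions are infinitely divisible, with characteristic exponents ψ_{t_1,…,t_k}, and suppose X is (f,g)-dilatively stable for continuous functions f, g : (0,∞) → (0,∞). If E(X_1²) < ∞, E(X_1) ≠ 0 and Var(X_1) > 0, then there exist unique β, γ ∈ ℝ such that f(T) = T^β and g(T) = T^γ for all T > 0. -/

import Mathlib

open MeasureTheory ProbabilityTheory Filter Topology

/-- Convolution of two measures on an additive measurable space. -/
noncomputable def mconv {E : Type*} [MeasurableSpace E] [Add E]
    (μ ν : Measure E) : Measure E :=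
  Measure.map (fun p : E × E => p.1 + p.2) (μ.prod ν)

/-- The `n`-fold convolution power of a measure. -/
noncomputable def convPow {E : Type*} [MeasurableSpace E] [Add E] [Zero E]
    (ν : Measure E) : ℕ → Measure E
  | 0 => Measure.dirac 0
  | n + 1 => mconv (convPow ν n) ν

/-!
Let `u` be the characteristic exponent of `X₁` and `φ = exp (-u)` its characteristic function.
As `u` is continuous with `u 0 = 0`, near `0` it is `-log φ`, so the second-order expansion of `φ`
gives `u θ = -i μ θ + σ² θ² / 2 + o(θ²)` with `μ = E X₁ ≠ 0` and `σ² = Var X₁ > 0`. Applying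
dilative stability at `c d`, and at `c` then at `d`, gives
`g (c d) u (f (c d) θ) = g c g d u (f c f d θ)`; comparing the coefficients of `θ` and `θ²` forces
`f` and `g` to be multiplicative. Continuous positive multiplicative functions on `(0, ∞)` are
powers, and the exponents are read off at `2`.
-/

open Asymptotics

section Expansion

variable {E : Type*} [NormedAddCommGroup E] [NormedSpace ℝ E]

lemma isBigO_smul_const {α : Type*} (f : α → ℝ) (c : E) (l : Filter α) :
    (fun x => f x • c) =O[l] f :=
  .of_bound ‖c‖ <| .of_forall fun x => by rw [norm_smul, mul_comm]

lemma eq_zero_of_pow_smul_isLittleO {c : E} {n : ℕ}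
    (h : (fun θ : ℝ => θ ^ n • c) =o[𝓝 0] fun θ => θ ^ n) : c = 0 := by
  by_contra hc
  have hO : (fun θ : ℝ => θ ^ n) =O[𝓝 0] fun θ => θ ^ n • c :=
    .of_bound ‖c‖⁻¹ <| .of_forall fun θ => by
      rw [norm_smul, mul_comm, mul_inv_cancel_right₀ (norm_ne_zero_iff.2 hc)]
  refine isLittleO_irrefl ?_ (h.trans_isBigO hO)
  have hne : ∀ᶠ θ : ℝ in 𝓝[≠] 0, θ ^ n • c ≠ 0 := eventually_mem_nhdsWithin.mono
    fun θ (hθ : θ ≠ 0) => smul_ne_zero (pow_ne_zero n hθ) hc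
  exact hne.frequently.filter_mono nhdsWithin_le_nhds

lemma eq_zero_of_smul_add_sq_smul_isLittleO {c₁ c₂ : E}
    (h : (fun θ : ℝ => θ • c₁ + θ ^ 2 • c₂) =o[𝓝 0] fun θ => θ ^ 2) : c₁ = 0 ∧ c₂ = 0 := by
  have hsq : (fun θ : ℝ => θ ^ 2) =o[𝓝 0] fun θ => θ ^ 1 := isLittleO_pow_pow one_lt_two
  obtain rfl : c₁ = 0 := eq_zero_of_pow_smul_isLittleO (n := 1) <| by
    simpa using (h.trans hsq).sub ((isBigO_smul_const _ c₂ _).trans_isLittleO hsq)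
  exact ⟨rfl, eq_zero_of_pow_smul_isLittleO (by simpa using h)⟩

lemma isLittleO_comp_mul {u : ℝ → E} {α β : E}
    (hu : (fun θ => u θ - (θ • α + θ ^ 2 • β)) =o[𝓝 0] fun θ => θ ^ 2) (c : ℝ) :
    (fun θ => u (c * θ) - (θ • c • α + θ ^ 2 • c ^ 2 • β)) =o[𝓝 0] fun θ => θ ^ 2 := by
  have hc : Tendsto (fun θ : ℝ => c * θ) (𝓝 0) (𝓝 0) := by
    simpa using (continuous_const_mul c).tendsto 0
  have hO : (fun θ : ℝ => (c * θ) ^ 2) =O[𝓝 0] fun θ => θ ^ 2 :=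
    .of_bound (c ^ 2) <| .of_forall fun θ => by simp [mul_pow]
  refine ((hu.comp_tendsto hc).trans_isBigO hO).congr_left fun θ => ?_
  simp only [Function.comp_apply, mul_pow, mul_smul, smul_comm θ c, smul_comm (θ ^ 2) (c ^ 2)]

lemma eq_of_smul_comp_mul_eq {u : ℝ → E} {α β : E} (hα : α ≠ 0) (hβ : β ≠ 0)
    (hu : (fun θ => u θ - (θ • α + θ ^ 2 • β)) =o[𝓝 0] fun θ => θ ^ 2)
    {a b s r : ℝ} (ha : a ≠ 0) (hs : s ≠ 0) (h : ∀ θ, a • u (s * θ) = b • u (r * θ)) :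
    s = r ∧ a = b := by
  -- the coefficients of `θ` and `θ²` in `a • u (s * θ) - b • u (r * θ) = 0`
  have hcoef := eq_zero_of_smul_add_sq_smul_isLittleO
    (c₁ := (a * s - b * r) • α) (c₂ := (a * s ^ 2 - b * r ^ 2) • β) <|
    ((isLittleO_comp_mul hu s).const_smul_left a).sub
      ((isLittleO_comp_mul hu r).const_smul_left b) |>.neg_left.congr_left fun θ => by
        simp only [Pi.smul_apply, smul_sub, h θ]
        module
  simp only [smul_eq_zero, hα, hβ, or_false, sub_eq_zero] at hcoef
  obtain ⟨h₁, h₂⟩ := hcoef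
  have hsr : s = r := mul_left_cancel₀ (mul_ne_zero ha hs) <| by linear_combination h₂ - r * h₁
  exact ⟨hsr, mul_right_cancel₀ hs (by rw [h₁, hsr])⟩

end Expansion

lemma logTaylor_three (z : ℂ) : Complex.logTaylor 3 z = z - z ^ 2 / 2 := by
  simp only [Complex.logTaylor, Finset.sum_range_succ, Finset.range_one, Finset.sum_singleton,
    zero_add, pow_one, pow_zero, mul_one, CharP.cast_eq_zero, div_zero, Nat.reduceAdd, even_two,
    Even.neg_pow, one_pow, one_mul, Nat.cast_one, div_one, Nat.cast_ofNat]
  ring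

lemma isLittleO_log_one_add {w : ℝ → ℂ} {α β : ℂ}
    (hw : (fun θ => w θ - (θ • α + θ ^ 2 • β)) =o[𝓝 0] fun θ => θ ^ 2) :
    (fun θ => Complex.log (1 + w θ) - (θ • α + θ ^ 2 • (β - α ^ 2 / 2))) =o[𝓝 0]
      fun θ => θ ^ 2 := by
  have hsq : (fun θ : ℝ => θ ^ 2) =o[𝓝 0] fun θ => θ := by
    simpa using isLittleO_pow_pow (𝕜 := ℝ) one_lt_two
  have hcube : (fun θ : ℝ => θ ^ 3) =o[𝓝 0] fun θ => θ ^ 2 := isLittleO_pow_pow (by norm_num)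
  have hlin : (fun θ : ℝ => w θ - θ • α) =O[𝓝 0] fun θ => θ ^ 2 :=
    hw.isBigO.add (isBigO_smul_const _ β _) |>.congr_left fun θ => by abel
  have hwO : w =O[𝓝 0] fun θ => θ :=
    (hlin.trans hsq.isBigO).add (isBigO_smul_const _ α _) |>.congr_left fun θ => by abel
  have hw0 : Tendsto w (𝓝 0) (𝓝 0) := hwO.trans_tendsto tendsto_id
  have hlog : (fun θ => Complex.log (1 + w θ) - (w θ - w θ ^ 2 / 2)) =o[𝓝 0]
      fun θ => θ ^ 2 := by
    have := (Complex.log_sub_logTaylor_isBigO 2).comp_tendsto hw0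
    simp only [Function.comp_def, Nat.reduceAdd, logTaylor_three] at this
    exact this.trans_isLittleO ((hwO.pow 3).trans_isLittleO hcube)
  have hprod : (fun θ => w θ ^ 2 - (θ • α) ^ 2) =o[𝓝 0] fun θ => θ ^ 2 := by
    refine (hlin.mul (hwO.add (isBigO_smul_const _ α _))).trans_isLittleO ?_
      |>.congr_left fun θ => by ring
    simpa [← pow_succ] using hcube
  refine (hlog.add hw).sub (hprod.const_mul_left (1 / 2)) |>.congr_left fun θ => ?_
  simp only [Complex.real_smul, Complex.ofReal_pow]
  ring

lemma eventually_log_exp_eq {u : ℝ → ℂ} (hu : ContinuousAt u 0) (hu0 : u 0 = 0) :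
    ∀ᶠ θ in 𝓝 0, Complex.log (Complex.exp (u θ)) = u θ := by
  have hsmall : ∀ᶠ θ in 𝓝 0, ‖u θ‖ < 1 := hu.norm.eventually_lt_const (by simp [hu0])
  filter_upwards [hsmall] with θ hθ
  have him : |(u θ).im| < Real.pi :=
    (Complex.abs_im_le_norm _).trans_lt (hθ.trans (by linarith [Real.pi_gt_three]))
  exact Complex.log_exp (neg_lt_of_abs_lt him) (abs_lt.1 him).2.le

lemma isLittleO_of_exp_neg_eq {u φ : ℝ → ℂ} (hu : ContinuousAt u 0) (hu0 : u 0 = 0)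
    (hφ : ∀ θ, Complex.exp (-u θ) = φ θ) {α β : ℂ}
    (hφ₂ : (fun θ => φ θ - (1 + (θ • α + θ ^ 2 • β))) =o[𝓝 0] fun θ => θ ^ 2) :
    (fun θ => u θ - (θ • (-α) + θ ^ 2 • (α ^ 2 / 2 - β))) =o[𝓝 0] fun θ => θ ^ 2 := by
  have hlog := isLittleO_log_one_add (w := fun θ => φ θ - 1) (by simpa only [sub_sub] using hφ₂)
  refine hlog.neg_left.congr' ?_ .rfl
  filter_upwards [eventually_log_exp_eq (u := fun θ => -u θ) hu.neg (by simp [hu0])] with θ hθ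
  rw [add_sub_cancel, ← hφ, hθ]
  simp only [smul_neg, neg_sub]
  module

lemma charFun_map_sub_isLittleO {Ω : Type*} [MeasurableSpace Ω] {P : Measure Ω}
    [IsProbabilityMeasure P] {Y : Ω → ℝ} (hY : MemLp Y 2 P) :
    (fun θ => charFun (P.map Y) θ
      - (1 + (θ • ((P[Y] : ℝ) * Complex.I) + θ ^ 2 • (-((P[Y ^ 2] : ℝ) : ℂ) / 2)))) =o[𝓝 0]
      fun θ => θ ^ 2 := by
  have hint : MemLp id 2 (P.map Y) :=
    (memLp_map_measure_iff aestronglyMeasurable_id hY.aemeasurable).2 hY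
  have := taylor_isLittleO_univ (x₀ := 0) (contDiff_charFun hint)
  simp only [taylorWithinEval_charFun_two_zero hY.aemeasurable hint, sub_zero] at this
  refine this.congr_left fun θ => ?_
  simp only [Complex.real_smul, Complex.ofReal_pow]
  ring

lemma isLittleO_of_exp_neg_eq_charFun {Ω : Type*} [MeasurableSpace Ω] {P : Measure Ω}
    [IsProbabilityMeasure P] {Y : Ω → ℝ} (hY : MemLp Y 2 P) {u : ℝ → ℂ} (hu : ContinuousAt u 0)
    (hu0 : u 0 = 0) (hexp : ∀ θ, Complex.exp (-u θ) = charFun (P.map Y) θ) :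
    (fun θ => u θ - (θ • -((P[Y] : ℝ) * Complex.I) + θ ^ 2 • ((variance Y P : ℝ) / 2 : ℂ)))
      =o[𝓝 0] fun θ => θ ^ 2 := by
  convert isLittleO_of_exp_neg_eq hu hu0 hexp (charFun_map_sub_isLittleO hY) using 6
  rw [variance_eq_sub hY]
  push_cast
  linear_combination (-((P[Y] : ℝ) : ℂ) ^ 2 / 2) * Complex.I_sq

def IsDilativelyStable (ψ : ∀ k : ℕ, (Fin k → ℝ) → (Fin k → ℝ) → ℂ) (f g : ℝ → ℝ) : Prop :=
  ∀ c : ℝ, 0 < c → ∀ (k : ℕ) (t : Fin k → ℝ), (∀ i, 0 < t i) → ∀ θ : Fin k → ℝ,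
    ψ k (fun i => c * t i) θ = ((g c : ℝ) : ℂ) * ψ k t (fun i => f c * θ i)

lemma IsDilativelyStable.smul_apply_mul_eq {ψ : ∀ k : ℕ, (Fin k → ℝ) → (Fin k → ℝ) → ℂ}
    {f g : ℝ → ℝ} (hψ : IsDilativelyStable ψ f g) {c d : ℝ} (hc : 0 < c) (hd : 0 < d)
    {k : ℕ} {t : Fin k → ℝ} (ht : ∀ i, 0 < t i) (θ : Fin k → ℝ) :
    g (c * d) • ψ k t (fun i => f (c * d) * θ i)
      = (g c * g d) • ψ k t (fun i => f c * f d * θ i) := by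
  have hcd := hψ (c * d) (mul_pos hc hd) k t ht θ
  have hc' := hψ c hc k (fun i => d * t i) (fun i => mul_pos hd (ht i)) θ
  have hd' := hψ d hd k t ht (fun i => f c * θ i)
  simp only [mul_assoc] at hcd hc' ⊢
  simp only [Complex.real_smul, ← hcd, hc', hd', mul_left_comm (f c), Complex.ofReal_mul]
  ring

lemma exists_eq_rpow_of_map_mul {f : ℝ → ℝ} (hpos : ∀ c, 0 < c → 0 < f c)
    (hcont : ContinuousOn f (Set.Ioi 0)) (hmul : ∀ c d, 0 < c → 0 < d → f (c * d) = f c * f d) :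
    ∃ β : ℝ, ∀ c, 0 < c → f c = c ^ β := by
  let F : ℝ →+ ℝ := .mk' (fun x => Real.log (f (Real.exp x))) fun x y => by
    rw [Real.exp_add, hmul _ _ (Real.exp_pos x) (Real.exp_pos y),
      Real.log_mul (hpos _ (Real.exp_pos x)).ne' (hpos _ (Real.exp_pos y)).ne']
  have hF : Continuous F :=
    Real.continuousOn_log.comp_continuous
      (hcont.comp_continuous Real.continuous_exp fun x => Real.exp_pos x)
      fun x => (hpos _ (Real.exp_pos x)).ne'
  refine ⟨F 1, fun c hc => ?_⟩
  have hlin := map_real_smul F hF (Real.log c) 1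
  rw [smul_eq_mul, mul_one, smul_eq_mul] at hlin
  calc f c = Real.exp (F (Real.log c)) := by
        simp [F, Real.exp_log hc, Real.exp_log (hpos c hc)]
    _ = c ^ F 1 := by rw [hlin, Real.rpow_def_of_pos hc]

theorem fg_power_of_nonzero_mean_general
    {Ω : Type*} [MeasurableSpace Ω] (P : Measure Ω) [IsProbabilityMeasure P]
    (X : ℝ → Ω → ℝ) (hX : ∀ t : ℝ, 0 < t → Measurable (X t))
    (ψ : ∀ k : ℕ, (Fin k → ℝ) → (Fin k → ℝ) → ℂ)
    (hψ0 : ∀ (k : ℕ) (t : Fin k → ℝ), (∀ i, 0 < t i) → ψ k t 0 = 0)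
    (hψcont : ∀ (k : ℕ) (t : Fin k → ℝ), (∀ i, 0 < t i) → Continuous (ψ k t))
    (hψchar : ∀ (k : ℕ) (t : Fin k → ℝ), (∀ i, 0 < t i) → ∀ θ : Fin k → ℝ,
      ∫ ω, Complex.exp (Complex.I * ∑ j, (θ j : ℂ) * (X (t j) ω : ℂ)) ∂P
        = Complex.exp (-ψ k t θ))
    (f g : ℝ → ℝ)
    (hfpos : ∀ c : ℝ, 0 < c → 0 < f c) (hgpos : ∀ c : ℝ, 0 < c → 0 < g c)
    (hfcont : ContinuousOn f (Set.Ioi 0)) (hgcont : ContinuousOn g (Set.Ioi 0))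
    -- (f,g)-dilative stability
    (hDS : ∀ c : ℝ, 0 < c → ∀ (k : ℕ) (t : Fin k → ℝ), (∀ i, 0 < t i) →
      ∀ θ : Fin k → ℝ,
        ψ k (fun i => c * t i) θ = ((g c : ℝ) : ℂ) * ψ k t (fun i => f c * θ i))
    -- moment conditions on `X₁`
    (hL2 : Integrable (fun ω => (X 1 ω) ^ 2) P)
    (hmean : ∫ ω, X 1 ω ∂P ≠ 0)
    (hvar : 0 < variance (X 1) P) :
    ∃! p : ℝ × ℝ, ∀ c : ℝ, 0 < c → f c = c ^ p.1 ∧ g c = c ^ p.2 := by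
  have hone : ∀ _ : Fin 1, (0 : ℝ) < 1 := fun _ => one_pos
  set u : ℝ → ℂ := fun θ => ψ 1 (fun _ => 1) (fun _ => θ)
  have hY : MemLp (X 1) 2 P :=
    (memLp_two_iff_integrable_sq (hX 1 one_pos).aestronglyMeasurable).2 hL2
  have hexp (θ : ℝ) : Complex.exp (-u θ) = charFun (P.map (X 1)) θ := by
    rw [← hψchar 1 _ hone, charFun_apply_real, integral_map hY.aemeasurable (by fun_prop)]
    simp [mul_comm]
  have hucont : Continuous u := (hψcont 1 _ hone).comp (by fun_prop)
  have hu := isLittleO_of_exp_neg_eq_charFun hY hucont.continuousAt (hψ0 1 _ hone) hexp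
  have hlin : -(((P[X 1] : ℝ) : ℂ) * Complex.I) ≠ 0 := by simpa using hmean
  have hquad : ((variance (X 1) P : ℝ) / 2 : ℂ) ≠ 0 :=
    div_ne_zero (mod_cast hvar.ne') two_ne_zero
  have hmul (c d : ℝ) (hc : 0 < c) (hd : 0 < d) :=
    eq_of_smul_comp_mul_eq hlin hquad hu (hgpos _ (mul_pos hc hd)).ne'
      (hfpos _ (mul_pos hc hd)).ne' fun θ =>
        IsDilativelyStable.smul_apply_mul_eq hDS hc hd hone fun _ => θ
  obtain ⟨β, hβ⟩ := exists_eq_rpow_of_map_mul hfpos hfcont fun c d hc hd => (hmul c d hc hd).1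
  obtain ⟨γ, hγ⟩ := exists_eq_rpow_of_map_mul hgpos hgcont fun c d hc hd => (hmul c d hc hd).2
  refine ⟨(β, γ), fun c hc => ⟨hβ c hc, hγ c hc⟩, fun p hp => ?_⟩
  have h2 := hp 2 two_pos
  rw [hβ 2 two_pos, hγ 2 two_pos, Real.rpow_right_inj two_pos (by norm_num),
    Real.rpow_right_inj two_pos (by norm_num)] at h2
  exact Prod.ext h2.1.symm h2.2.symm

/-- If an infinitely divisible process indexed by `(0,∞)` is
`(f,g)`-dilatively stable with `E(X₁²) < ∞`, `E(X₁) ≠ 0` and `Var(X₁) > 0`, then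
`f` and `g` are uniquely determined power functions. -/
theorem fg_power_of_nonzero_mean
    {Ω : Type*} [MeasurableSpace Ω] (P : Measure Ω) [IsProbabilityMeasure P]
    (X : ℝ → Ω → ℝ) (hX : ∀ t : ℝ, 0 < t → Measurable (X t))
    (ψ : ∀ k : ℕ, (Fin k → ℝ) → (Fin k → ℝ) → ℂ)
    (hψ0 : ∀ (k : ℕ) (t : Fin k → ℝ), (∀ i, 0 < t i) → ψ k t 0 = 0)
    (hψcont : ∀ (k : ℕ) (t : Fin k → ℝ), (∀ i, 0 < t i) → Continuous (ψ k t))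
    (hψchar : ∀ (k : ℕ) (t : Fin k → ℝ), (∀ i, 0 < t i) → ∀ θ : Fin k → ℝ,
      ∫ ω, Complex.exp (Complex.I * ∑ j, (θ j : ℂ) * (X (t j) ω : ℂ)) ∂P
        = Complex.exp (-ψ k t θ))
    (hID : ∀ (k : ℕ) (t : Fin k → ℝ), (∀ i, 0 < t i) → ∀ n : ℕ, 0 < n →
      ∃ ρ : Measure (Fin k → ℝ), IsProbabilityMeasure ρ ∧
        convPow ρ n = Measure.map (fun ω i => X (t i) ω) P)
    (f g : ℝ → ℝ)
    (hfpos : ∀ c : ℝ, 0 < c → 0 < f c) (hgpos : ∀ c : ℝ, 0 < c → 0 < g c)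
    (hfcont : ContinuousOn f (Set.Ioi 0)) (hgcont : ContinuousOn g (Set.Ioi 0))
    -- (f,g)-dilative stability
    (hDS : ∀ c : ℝ, 0 < c → ∀ (k : ℕ) (t : Fin k → ℝ), (∀ i, 0 < t i) →
      ∀ θ : Fin k → ℝ,
        ψ k (fun i => c * t i) θ = ((g c : ℝ) : ℂ) * ψ k t (fun i => f c * θ i))
    -- moment conditions on `X₁`
    (hL2 : Integrable (fun ω => (X 1 ω) ^ 2) P)
    (hmean : ∫ ω, X 1 ω ∂P ≠ 0)
    (hvar : 0 < variance (X 1) P) :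
    ∃! p : ℝ × ℝ, ∀ c : ℝ, 0 < c → f c = c ^ p.1 ∧ g c = c ^ p.2 :=
  fg_power_of_nonzero_mean_general P X hX ψ hψ0 hψcont hψchar f g hfpos hgpos hfcont hgcont hDS hL2
    hmean hvar
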